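/- arXiv:2204.04242 — 3 statements merged into one kernel-verified Lean document; each statement's English description precedes it below -/
import Mathlib

section
/- Let A and B be finite sets (the covers of two patterns), let θ be a natural number with θ ≤ |A| (i.e., the pattern with cover A is frequent), and assume A ∪ B is nonempty. Then the lower bound LB = max(0, θ − |A \ B|) / (|B| + |A \ B|) satisfies LB ≤ |A ∩ B| / |A ∪ B|, i.e., LB is a lower bound on the Jaccard index of A and B (all quotients taken as real-number division of the cardinalities). -/
open Finset

lemma Finset.cast_sub_card_sdiff_le_card_inter {α : Type*} [DecidableEq α] {A B : Finset α}
    {θ : ℕ} (hθ : θ ≤ #A) : (θ : ℝ) - #(A \ B) ≤ #(A ∩ B) := by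
  have hA : #(A ∩ B) + #(A \ B) = #A := card_inter_add_card_sdiff A B
  rw [sub_le_iff_le_add]
  exact_mod_cast hA ▸ hθ

theorem lb_le_jaccard_general (A B : Finset ℕ) (θ : ℕ) (hθ : θ ≤ A.card) :
    max 0 ((θ : ℝ) - (A \ B).card) / ((B.card : ℝ) + (A \ B).card) ≤
      ((A ∩ B).card : ℝ) / ((A ∪ B).card : ℝ) := by
  calc max 0 ((θ : ℝ) - #(A \ B)) / (#B + #(A \ B))
      ≤ #(A ∩ B) / (#B + #(A \ B)) :=
        div_le_div_of_nonneg_right (max_le (by positivity) (cast_sub_card_sdiff_le_card_inter hθ))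
          (by positivity)
    _ = #(A ∩ B) / #(A ∪ B) := by
        rw [← card_sdiff_add_card A B, add_comm (#(A \ B)), Nat.cast_add]

/-- The lower-bound relaxation `LB = max(0, θ − |A \ B|) / (|B| + |A \ B|)` is a lower
bound on the Jaccard index `|A ∩ B| / |A ∪ B|`, for finite sets `A`, `B` with
`θ ≤ |A|` and `A ∪ B` nonempty. -/
theorem lb_le_jaccard (A B : Finset ℕ) (θ : ℕ) (hθ : θ ≤ A.card)
    (hAB : (A ∪ B).Nonempty) :
    max 0 ((θ : ℝ) - (A \ B).card) / ((B.card : ℝ) + (A \ B).card) ≤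
      ((A ∩ B).card : ℝ) / ((A ∪ B).card : ℝ) :=
  lb_le_jaccard_general A B θ hθ
end

section
/- Let H be a nonempty finite set, let θ be a natural number, and let d and d' be natural numbers with d' ≤ d. Then max(0, θ − d) / (|H| + d) ≤ max(0, θ − d') / (|H| + d') (real-number division). Consequently, for finite sets C_p, C_q, H with H nonempty and C_q ⊆ C_p (the cover of a superset pattern is contained in the cover of a subset pattern), the lower bound is anti-monotone: max(0, θ − |C_p \ H|) / (|H| + |C_p \ H|) ≤ max(0, θ − |C_q \ H|) / (|H| + |C_q \ H|). -/
theorem max_zero_sub_div_add_le_of_le {K : Type*} [Field K] [LinearOrder K] [IsStrictOrderedRing K]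
    {θ b d d' : K} (hb : 0 < b) (hd' : 0 ≤ d') (h : d' ≤ d) :
    max 0 (θ - d) / (b + d) ≤ max 0 (θ - d') / (b + d') :=
  div_le_div₀ (le_max_left _ _) (max_le_max le_rfl (sub_le_sub_left h θ)) (by positivity)
    (add_le_add_right h b)

/-- Anti-monotonicity of the lower bound `max(0, θ − d) / (|H| + d)`:
it is anti-monotone in `d`, and consequently anti-monotone under shrinking of covers
`C_q ⊆ C_p`. -/
theorem lb_antimonotone :
    (∀ (H : Finset ℕ) (θ d d' : ℕ), H.Nonempty → d' ≤ d →
      max 0 ((θ : ℝ) - d) / ((H.card : ℝ) + d) ≤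
        max 0 ((θ : ℝ) - d') / ((H.card : ℝ) + d')) ∧
    (∀ (Cp Cq H : Finset ℕ) (θ : ℕ), H.Nonempty → Cq ⊆ Cp →
      max 0 ((θ : ℝ) - (Cp \ H).card) / ((H.card : ℝ) + (Cp \ H).card) ≤
        max 0 ((θ : ℝ) - (Cq \ H).card) / ((H.card : ℝ) + (Cq \ H).card)) := by
  have antitone_in_d : ∀ (H : Finset ℕ) (θ d d' : ℕ), H.Nonempty → d' ≤ d →
      max 0 ((θ : ℝ) - d) / ((H.card : ℝ) + d) ≤
        max 0 ((θ : ℝ) - d') / ((H.card : ℝ) + d') := fun H θ d d' hH h =>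
    max_zero_sub_div_add_le_of_le (by exact_mod_cast hH.card_pos) d'.cast_nonneg
      (by exact_mod_cast h)
  refine ⟨antitone_in_d, fun Cp Cq H θ hH hsub => ?_⟩
  exact antitone_in_d H θ _ _ hH (Finset.card_le_card (Finset.sdiff_subset_sdiff hsub le_rfl))
end

section
/- Let C_p, C_q, H be finite sets with C_q ⊆ C_p, H nonempty, and let θ be a natural number with θ ≤ |C_q|. Let J_max be a real number. If max(0, θ − |C_p \ H|) / (|H| + |C_p \ H|) > J_max, then |C_q ∩ H| / |C_q ∪ H| > J_max (real-number division of cardinalities). That is, once the lower bound computed from the cover C_p of a pattern p exceeds the diversity threshold J_max, every frequent pattern q whose cover C_q is contained in C_p has Jaccard index with the history cover H exceeding J_max, so it violates the diversity constraint and the whole branch can be pruned. -/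
/-!
Write `D = C_p \ H`. Since `C_q ⊆ C_p`, the elements of `C_q` outside `H` all lie in `D`, so
`|C_q ∩ H| = |C_q| - |C_q \ H| ≥ θ - |D|`, and `C_q ∪ H ⊆ D ∪ H` gives `|C_q ∪ H| ≤ |H| + |D|`.
Raising the numerator and lowering the denominator can only increase the ratio, so
`LB(C_p, H) ≤ Jac(C_q, H)`, and the threshold `J_max` is exceeded as well.
-/

open Finset

/-- The hypothesis `b ≤ d` lets this hold also when `d = 0`, where division returns `0`. -/
theorem div_le_div_of_le_of_le_of_le {K : Type*} [Field K] [LinearOrder K]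
    [IsStrictOrderedRing K] {a b c d : K} (ha : 0 ≤ a) (hab : a ≤ b) (hbd : b ≤ d)
    (hdc : d ≤ c) : a / c ≤ b / d := by
  rcases ha.eq_or_lt with rfl | ha
  · rw [zero_div]
    exact div_nonneg hab (hab.trans hbd)
  · have hd : 0 < d := ha.trans_le (hab.trans hbd)
    exact div_le_div₀ (ha.le.trans hab) hab hd hdc

noncomputable def jaccard {α : Type*} [DecidableEq α] (A B : Finset α) : ℝ :=
  #(A ∩ B) / #(A ∪ B)

noncomputable def jaccardLowerBound {α : Type*} [DecidableEq α] (θ : ℕ) (A B : Finset α) : ℝ :=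
  max 0 ((θ : ℝ) - #(A \ B)) / (#B + #(A \ B))

namespace Finset

variable {α : Type*} [DecidableEq α] {s t u : Finset α}

theorem card_union_le_card_add_card_sdiff_of_subset (hst : s ⊆ t) :
    #(s ∪ u) ≤ #u + #(t \ u) := by
  rw [← card_sdiff_add_card, add_comm]
  exact Nat.add_le_add_left (card_le_card (sdiff_subset_sdiff hst le_rfl)) _

theorem card_le_card_inter_add_card_sdiff_of_subset (hst : s ⊆ t) :
    #s ≤ #(s ∩ u) + #(t \ u) := by
  rw [← card_inter_add_card_sdiff s u]
  exact Nat.add_le_add_left (card_le_card (sdiff_subset_sdiff hst le_rfl)) _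

theorem jaccardLowerBound_le_jaccard {θ : ℕ} (hst : s ⊆ t) (hθ : θ ≤ #s) :
    jaccardLowerBound θ t u ≤ jaccard s u := by
  have hnum : max 0 ((θ : ℝ) - #(t \ u)) ≤ #(s ∩ u) := by
    have : θ ≤ #(s ∩ u) + #(t \ u) :=
      hθ.trans (card_le_card_inter_add_card_sdiff_of_subset hst)
    exact max_le (Nat.cast_nonneg _) (by rw [sub_le_iff_le_add]; exact_mod_cast this)
  have hden : (#(s ∪ u) : ℝ) ≤ #u + #(t \ u) := by
    exact_mod_cast card_union_le_card_add_card_sdiff_of_subset hst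
  exact div_le_div_of_le_of_le_of_le (le_max_left _ _) hnum
    (by exact_mod_cast card_le_card inter_subset_union) hden

end Finset

theorem lb_pruning_sound_general (Cp Cq H : Finset ℕ) (θ : ℕ) (Jmax : ℝ)
    (hsub : Cq ⊆ Cp) (hθ : θ ≤ Cq.card)
    (hLB : max 0 ((θ : ℝ) - (Cp \ H).card) / ((H.card : ℝ) + (Cp \ H).card) > Jmax) :
    ((Cq ∩ H).card : ℝ) / ((Cq ∪ H).card : ℝ) > Jmax :=
  hLB.trans_le (jaccardLowerBound_le_jaccard hsub hθ)

/-- Pruning soundness: if the lower bound computed from the cover `C_p` exceeds the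
diversity threshold `J_max`, then every frequent pattern whose cover `C_q` is contained
in `C_p` has Jaccard index with the history cover `H` exceeding `J_max`. -/
theorem lb_pruning_sound (Cp Cq H : Finset ℕ) (θ : ℕ) (Jmax : ℝ)
    (hsub : Cq ⊆ Cp) (hH : H.Nonempty) (hθ : θ ≤ Cq.card)
    (hLB : max 0 ((θ : ℝ) - (Cp \ H).card) / ((H.card : ℝ) + (Cp \ H).card) > Jmax) :
    ((Cq ∩ H).card : ℝ) / ((Cq ∪ H).card : ℝ) > Jmax :=
  lb_pruning_sound_general Cp Cq H θ Jmax hsub hθ hLB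
end
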